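/- Assume |p| < rs. Define U = {z = (α, β, M) ∈ Z : |α| < r, |β| < s, f₀(M − Mᵀ)·(α − β) = 0, ‖M₀(z)‖_n < G(z)}. Then the Λ-convex hull K_{r,s}^{Λ} is contained in the topological closure of U in Z. -/

import Mathlib

open Matrix

noncomputable section

/-- Vectors in ℝ³. -/
abbrev V3 := Fin 3 → ℝ
/-- 3×3 real matrices. -/
abbrev Mat3 := Matrix (Fin 3) (Fin 3) ℝ
/-- The state space Z = ℝ³ × ℝ³ × ℝ^{3×3}. -/
abbrev Z := V3 × V3 × Mat3

/-- Euclidean dot product on ℝ³. -/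
def dot3 (u v : V3) : ℝ := ∑ i, u i * v i
/-- Euclidean norm on ℝ³. -/
def norm3 (v : V3) : ℝ := Real.sqrt (dot3 v v)
/-- Outer (tensor) product u ⊗ v. -/
def outer (u v : V3) : Mat3 := Matrix.vecMulVec u v

/-- The constraint set K_{r,s}. -/
def Krs (r s p : ℝ) : Set Z :=
  {z | z.2.2 = outer z.1 z.2.1 + p • (1 : Mat3) ∧ norm3 z.1 = r ∧ norm3 z.2.1 = s}

/-- The wave cone Λ. -/
def waveCone : Set Z :=
  {z | ∃ (ξ : V3) (c : ℝ), ξ ≠ 0 ∧ z.2.2 *ᵥ ξ + c • z.1 = 0 ∧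
    z.2.2ᵀ *ᵥ ξ + c • z.2.1 = 0 ∧ dot3 z.1 ξ = 0 ∧ dot3 z.2.1 ξ = 0}

/-- M₀(z) = α⊗β − M + p·Id. -/
def M0 (p : ℝ) (z : Z) : Mat3 := outer z.1 z.2.1 - z.2.2 + p • (1 : Mat3)

/-- G(z) = √((r² − |α|²)(s² − |β|²)). -/
def Gfun (r s : ℝ) (z : Z) : ℝ :=
  Real.sqrt ((r ^ 2 - norm3 z.1 ^ 2) * (s ^ 2 - norm3 z.2.1 ^ 2))

/-- Iterated lamination sets K_{r,s}^{Λ,i}. -/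
def lamSet (r s p : ℝ) : ℕ → Set Z
  | 0 => Krs r s p
  | (i + 1) => {z | ∃ zb ∈ waveCone, ∃ t₁ t₂ : ℝ, t₁ ≤ 0 ∧ 0 ≤ t₂ ∧
      z + t₁ • zb ∈ lamSet r s p i ∧ z + t₂ • zb ∈ lamSet r s p i}

/-- The positive semidefinite square root of a positive semidefinite matrix -/
def Matrix.PosSemidef.sqrt {n 𝕜 : Type*} [Fintype n] [DecidableEq n] [RCLike 𝕜]
    [PartialOrder 𝕜] [StarOrderedRing 𝕜]
    {A : Matrix n n 𝕜} (hA : A.PosSemidef) : Matrix n n 𝕜 :=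
  hA.1.eigenvectorUnitary.1 * diagonal ((↑) ∘ Real.sqrt ∘ hA.1.eigenvalues) *
  (star hA.1.eigenvectorUnitary : Matrix n n 𝕜)

/-- Nuclear norm: trace of the PSD square root of AᵀA. -/
def nuclearNorm (A : Mat3) : ℝ := (Matrix.posSemidef_conjTranspose_mul_self A).sqrt.trace

/-- f₀(A) = (A₂₃, A₃₁, A₁₂) (0-indexed: (A 1 2, A 2 0, A 0 1)). -/
def f0 (A : Mat3) : V3 := ![A 1 2, A 2 0, A 0 1]

/-- Frobenius norm of a matrix. -/
def frobNorm (A : Mat3) : ℝ := Real.sqrt (∑ i, ∑ j, A i j ^ 2)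

/-- Λ-convexity of a set. -/
def LambdaConvex (S : Set Z) : Prop :=
  ∀ z₁ ∈ S, ∀ z₂ ∈ S, z₁ - z₂ ∈ waveCone →
    ∀ t : ℝ, t ∈ Set.Icc (0 : ℝ) 1 → z₁ + t • (z₂ - z₁) ∈ S

/-- The Λ-convex hull of K_{r,s}: the intersection of all Λ-convex sets containing it. -/
def lambdaHull (r s p : ℝ) : Set Z := ⋂₀ {S : Set Z | LambdaConvex S ∧ Krs r s p ⊆ S}

-- Part A: vector lemmas
section VecLemmas

lemma dot3_self_nonneg (v : V3) : 0 ≤ dot3 v v :=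
  Finset.sum_nonneg fun i _ => mul_self_nonneg _

lemma dot3_self_eq_sum_sq (v : V3) : dot3 v v = ∑ i, v i ^ 2 := by
  simp [dot3, sq]

lemma norm3_nonneg (v : V3) : 0 ≤ norm3 v := Real.sqrt_nonneg _

lemma norm3_sq (v : V3) : norm3 v ^ 2 = dot3 v v := Real.sq_sqrt (dot3_self_nonneg v)

lemma norm3_smul (c : ℝ) (v : V3) : norm3 (c • v) = |c| * norm3 v := by
  unfold norm3
  have : dot3 (c • v) (c • v) = c ^ 2 * dot3 v v := by
    simp [dot3, Fin.sum_univ_three]; ring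
  rw [this, Real.sqrt_mul (sq_nonneg c), Real.sqrt_sq_eq_abs]

lemma dot3_le_norm3 (u v : V3) : dot3 u v ≤ norm3 u * norm3 v := by
  have h := Finset.sum_mul_sq_le_sq_mul_sq Finset.univ u v
  have h2 : dot3 u v ^ 2 ≤ (norm3 u * norm3 v) ^ 2 := by
    rw [mul_pow, norm3_sq, norm3_sq, dot3_self_eq_sum_sq, dot3_self_eq_sum_sq]
    exact h
  have hnn : 0 ≤ norm3 u * norm3 v := mul_nonneg (norm3_nonneg u) (norm3_nonneg v)
  nlinarith [h2, hnn, sq_nonneg (dot3 u v + norm3 u * norm3 v)]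

lemma norm3_add_le (u v : V3) : norm3 (u + v) ≤ norm3 u + norm3 v := by
  have key : dot3 (u + v) (u + v) = dot3 u u + 2 * dot3 u v + dot3 v v := by
    simp [dot3, Fin.sum_univ_three]; ring
  have h1 : dot3 (u + v) (u + v) ≤ (norm3 u + norm3 v) ^ 2 := by
    rw [key]
    have := dot3_le_norm3 u v
    have hu := norm3_sq u; have hv := norm3_sq v
    nlinarith
  calc norm3 (u + v) = Real.sqrt (dot3 (u+v) (u+v)) := rfl
  _ ≤ Real.sqrt ((norm3 u + norm3 v) ^ 2) := Real.sqrt_le_sqrt h1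
  _ = |norm3 u + norm3 v| := Real.sqrt_sq_eq_abs _
  _ = norm3 u + norm3 v := abs_of_nonneg (add_nonneg (norm3_nonneg u) (norm3_nonneg v))

lemma dot3_mulVec_self (C : Mat3) (w : V3) :
    dot3 (C *ᵥ w) (C *ᵥ w) = dot3 w ((Cᵀ * C) *ᵥ w) := by
  simp [dot3, Matrix.mulVec, dotProduct, Matrix.mul_apply, Matrix.transpose_apply,
    Fin.sum_univ_three]
  ring

lemma norm3_mulVec_eq_of_sq (A B : Mat3) (hB : Bᵀ = B) (h : B * B = Aᵀ * A) (v : V3) :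
    norm3 (B *ᵥ v) = norm3 (A *ᵥ v) := by
  unfold norm3
  congr 1
  rw [dot3_mulVec_self, dot3_mulVec_self, hB, h]

lemma norm3_eq_one_of_dot (v : V3) (h : dot3 v v = 1) : norm3 v = 1 := by
  unfold norm3; rw [h]; exact Real.sqrt_one

lemma dot3_self_pos_of_ne (v : V3) (h : v ≠ 0) : 0 < dot3 v v := by
  rcases Function.ne_iff.mp h with ⟨i, hi⟩
  have h1 : v i ^ 2 ≤ dot3 v v := by
    rw [dot3_self_eq_sum_sq]
    exact Finset.single_le_sum (fun j _ => sq_nonneg (v j)) (Finset.mem_univ i)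
  have h2 : 0 < v i ^ 2 := by
    have := sq_nonneg (v i)
    rcases this.lt_or_eq with h | h
    · exact h
    · exact absurd (by nlinarith : v i = 0) hi
  linarith

end VecLemmas
section SqrtPort
open scoped MatrixOrder

lemma Matrix.PosSemidef.sqrt_eq_cfc {A : Mat3} (hA : A.PosSemidef) : hA.sqrt = CFC.sqrt A := by
  rw [CFC.sqrt_eq_real_sqrt A hA.nonneg, cfcₙ_eq_cfc, hA.1.cfc_eq]
  rfl

lemma Matrix.PosSemidef.posSemidef_sqrt {A : Mat3} (hA : A.PosSemidef) :
    hA.sqrt.PosSemidef := by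
  rw [hA.sqrt_eq_cfc]; exact (CFC.sqrt_nonneg A).posSemidef

lemma Matrix.PosSemidef.sq_sqrt {A : Mat3} (hA : A.PosSemidef) : hA.sqrt ^ 2 = A := by
  rw [hA.sqrt_eq_cfc]; exact CFC.sq_sqrt A hA.nonneg

lemma Matrix.PosSemidef.eq_sqrt_of_sq_eq {A B : Mat3} (hA : A.PosSemidef) (hB : B.PosSemidef)
    (h : A ^ 2 = B) : A = hB.sqrt := by
  rw [hB.sqrt_eq_cfc]; exact (CFC.sqrt_unique (by rw [← h, pow_two]) hA.nonneg).symm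

end SqrtPort
-- Part B1: sqA basics and eigen data
section NNBasic

lemma conjT (A : Mat3) : Aᴴ = Aᵀ := by
  ext i j; simp [Matrix.conjTranspose_apply]

/-- the PSD square root of AᵀA -/
def sqA (A : Mat3) : Mat3 := (Matrix.posSemidef_conjTranspose_mul_self A).sqrt

lemma sqA_posSemidef (A : Mat3) : (sqA A).PosSemidef :=
  (Matrix.posSemidef_conjTranspose_mul_self A).posSemidef_sqrt

lemma sqA_transpose (A : Mat3) : (sqA A)ᵀ = sqA A := by
  rw [← conjT]; exact (sqA_posSemidef A).1

lemma sqA_mul_self (A : Mat3) : sqA A * sqA A = Aᵀ * A := by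
  have h := (Matrix.posSemidef_conjTranspose_mul_self A).sq_sqrt
  rw [pow_two] at h
  rw [← conjT]; exact h

lemma nuclearNorm_eq_trace_sqA (A : Mat3) : nuclearNorm A = (sqA A).trace := rfl

lemma nuclearNorm_eq_of_psd_sq (A B : Mat3) (hB : B.PosSemidef)
    (h : B * B = Aᵀ * A) : nuclearNorm A = B.trace := by
  have h2 : B ^ 2 = Aᴴ * A := by rw [pow_two, h, conjT]
  have := Matrix.PosSemidef.eq_sqrt_of_sq_eq hB (Matrix.posSemidef_conjTranspose_mul_self A) h2
  rw [nuclearNorm_eq_trace_sqA, sqA, ← this]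

lemma norm3_sqA_mulVec (A : Mat3) (v : V3) : norm3 (sqA A *ᵥ v) = norm3 (A *ᵥ v) :=
  norm3_mulVec_eq_of_sq A (sqA A) (sqA_transpose A) (sqA_mul_self A) v

lemma psd_smul {S : Mat3} (hS : S.PosSemidef) {c : ℝ} (hc : 0 ≤ c) : (c • S).PosSemidef := by
  constructor
  · unfold Matrix.IsHermitian
    rw [conjT, Matrix.transpose_smul, ← conjT, hS.1]
  · exact (hS.smul hc).2

/-- eigen data for sqA -/
lemma eigen_sqA (A : Mat3) : ∃ (U : Mat3) (lam : Fin 3 → ℝ),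
    U * Uᵀ = 1 ∧ Uᵀ * U = 1 ∧ (∀ i, 0 ≤ lam i) ∧
    sqA A = U * Matrix.diagonal lam * Uᵀ ∧ nuclearNorm A = ∑ i, lam i := by
  have hS : (sqA A).PosSemidef := sqA_posSemidef A
  have hSh : (sqA A).IsHermitian := hS.1
  set U : Mat3 := (hSh.eigenvectorUnitary : Mat3) with hU
  have hmem := (hSh.eigenvectorUnitary).2
  have hU1 : U * Uᵀ = 1 := by
    have := (Matrix.mem_unitaryGroup_iff).mp hmem
    rwa [Matrix.star_eq_conjTranspose, conjT] at this
  have hU2 : Uᵀ * U = 1 := by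
    have := (Matrix.mem_unitaryGroup_iff').mp hmem
    rwa [Matrix.star_eq_conjTranspose, conjT] at this
  refine ⟨U, hSh.eigenvalues, hU1, hU2, fun i => hS.eigenvalues_nonneg i, ?_, ?_⟩
  · have := hSh.spectral_theorem
    rwa [Unitary.conjStarAlgAut_apply, Matrix.star_eq_conjTranspose, conjT, show (RCLike.ofReal ∘ hSh.eigenvalues : Fin 3 → ℝ) = hSh.eigenvalues from rfl] at this
  · rw [nuclearNorm_eq_trace_sqA]
    have hsp := hSh.spectral_theorem
    rw [Unitary.conjStarAlgAut_apply, Matrix.star_eq_conjTranspose, conjT, show (RCLike.ofReal ∘ hSh.eigenvalues : Fin 3 → ℝ) = hSh.eigenvalues from rfl] at hsp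
    have h4 : (sqA A).trace = (U * Matrix.diagonal hSh.eigenvalues * Uᵀ).trace :=
      congrArg Matrix.trace hsp
    rw [h4, Matrix.trace_mul_cycle, hU2, Matrix.one_mul, Matrix.trace_diagonal]

end NNBasic
-- Part B2: column sums and duality
section NNDual

lemma sum_dot3_columns (U : Mat3) (hU : U * Uᵀ = 1) (B W : Mat3) :
    ∑ i, dot3 (B *ᵥ (fun j => U j i)) (W *ᵥ (fun j => U j i)) = (Bᵀ * W).trace := by
  have e00 := congrFun (congrFun hU 0) 0
  have e01 := congrFun (congrFun hU 0) 1
  have e02 := congrFun (congrFun hU 0) 2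
  have e10 := congrFun (congrFun hU 1) 0
  have e11 := congrFun (congrFun hU 1) 1
  have e12 := congrFun (congrFun hU 1) 2
  have e20 := congrFun (congrFun hU 2) 0
  have e21 := congrFun (congrFun hU 2) 1
  have e22 := congrFun (congrFun hU 2) 2
  simp only [Matrix.mul_apply, Matrix.transpose_apply, Matrix.one_apply, Fin.sum_univ_three,
    Fin.isValue, show ((0:Fin 3) = 1) = False by simp, show ((0:Fin 3) = 2) = False by simp,
    show ((1:Fin 3) = 0) = False by simp, show ((1:Fin 3) = 2) = False by simp,
    show ((2:Fin 3) = 0) = False by simp, show ((2:Fin 3) = 1) = False by simp,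
    if_true, if_false, eq_self_iff_true] at e00 e01 e02 e10 e11 e12 e20 e21 e22
  simp only [dot3, Matrix.mulVec, dotProduct, Matrix.trace, Matrix.diag,
    Matrix.mul_apply, Matrix.transpose_apply, Fin.sum_univ_three]
  linear_combination (B 0 0 * W 0 0 + B 1 0 * W 1 0 + B 2 0 * W 2 0) * e00 +
      (B 0 0 * W 0 1 + B 1 0 * W 1 1 + B 2 0 * W 2 1) * e01 +
      (B 0 0 * W 0 2 + B 1 0 * W 1 2 + B 2 0 * W 2 2) * e02 +
      (B 0 1 * W 0 0 + B 1 1 * W 1 0 + B 2 1 * W 2 0) * e10 +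
      (B 0 1 * W 0 1 + B 1 1 * W 1 1 + B 2 1 * W 2 1) * e11 +
      (B 0 1 * W 0 2 + B 1 1 * W 1 2 + B 2 1 * W 2 2) * e12 +
      (B 0 2 * W 0 0 + B 1 2 * W 1 0 + B 2 2 * W 2 0) * e20 +
      (B 0 2 * W 0 1 + B 1 2 * W 1 1 + B 2 2 * W 2 1) * e21 +
      (B 0 2 * W 0 2 + B 1 2 * W 1 2 + B 2 2 * W 2 2) * e22

end NNDual
-- Part B3: triangle inequality for nuclearNorm
section NNTriangle

lemma col_mulVec (A U : Mat3) (i : Fin 3) :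
    A *ᵥ (fun j => U j i) = fun j => (A * U) j i := by
  funext j; simp [Matrix.mulVec, dotProduct, Matrix.mul_apply]

lemma norm3_col_eq_one (U : Mat3) (hU2 : Uᵀ * U = 1) (i : Fin 3) :
    norm3 (fun j => U j i) = 1 := by
  apply norm3_eq_one_of_dot
  have e := congrFun (congrFun hU2 i) i
  simp only [Matrix.mul_apply, Matrix.transpose_apply, Matrix.one_apply_eq,
    Fin.sum_univ_three] at e
  simp only [dot3, Fin.sum_univ_three]
  linarith [e]

lemma sandwich_mul (U X Y : Mat3) (hU2 : Uᵀ * U = 1) :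
    (U * X * Uᵀ) * (U * Y * Uᵀ) = U * (X * Y) * Uᵀ := by
  simp only [Matrix.mul_assoc]
  rw [← Matrix.mul_assoc Uᵀ U (Y * Uᵀ), hU2, Matrix.one_mul]

lemma norm3_orth_mulVec (U : Mat3) (hU2 : Uᵀ * U = 1) (w : V3) :
    norm3 (U *ᵥ w) = norm3 w := by
  unfold norm3; congr 1
  rw [dot3_mulVec_self, hU2, Matrix.one_mulVec]

lemma norm3_orthT_mulVec (U : Mat3) (hU1 : U * Uᵀ = 1) (w : V3) :
    norm3 (Uᵀ *ᵥ w) = norm3 w := by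
  unfold norm3; congr 1
  rw [dot3_mulVec_self, Matrix.transpose_transpose, hU1, Matrix.one_mulVec]

lemma contract_sandwich (U : Mat3) (e : Fin 3 → ℝ) (v : V3)
    (hU1 : U * Uᵀ = 1) (hU2 : Uᵀ * U = 1) (he : ∀ i, e i ^ 2 ≤ 1) :
    norm3 ((U * Matrix.diagonal e * Uᵀ) *ᵥ v) ≤ norm3 v := by
  have h1 : (U * Matrix.diagonal e * Uᵀ) *ᵥ v
      = U *ᵥ (Matrix.diagonal e *ᵥ (Uᵀ *ᵥ v)) := by
    rw [Matrix.mulVec_mulVec, Matrix.mulVec_mulVec]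
  rw [h1, norm3_orth_mulVec U hU2]
  set y := Uᵀ *ᵥ v with hy
  have h2 : norm3 (Matrix.diagonal e *ᵥ y) ≤ norm3 y := by
    unfold norm3
    apply Real.sqrt_le_sqrt
    have hd : ∀ i, (Matrix.diagonal e *ᵥ y) i = e i * y i := by
      intro i; simp [Matrix.mulVec_diagonal]
    rw [dot3_self_eq_sum_sq, dot3_self_eq_sum_sq]
    apply Finset.sum_le_sum
    intro i _
    rw [hd i, mul_pow]
    nlinarith [he i, sq_nonneg (y i)]
  calc norm3 (Matrix.diagonal e *ᵥ y) ≤ norm3 y := h2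
  _ = norm3 v := norm3_orthT_mulVec U hU1 v

lemma trace_le_nn (Bc W : Mat3) (hB : ∀ v, norm3 (Bc *ᵥ v) ≤ norm3 v) :
    (Bcᵀ * W).trace ≤ nuclearNorm W := by
  obtain ⟨U, lam, hU1, hU2, hpos, hspec, hnn⟩ := eigen_sqA W
  have hSU : sqA W * U = U * Matrix.diagonal lam := by
    rw [hspec, Matrix.mul_assoc (U * Matrix.diagonal lam) Uᵀ U, hU2, Matrix.mul_one]
  have hcol : ∀ i, norm3 (W *ᵥ (fun j => U j i)) = lam i := by
    intro i
    rw [← norm3_sqA_mulVec, col_mulVec, hSU]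
    have : (fun j => (U * Matrix.diagonal lam) j i) = lam i • (fun j => U j i) := by
      funext j; simp [Matrix.mul_diagonal]; ring
    rw [this, norm3_smul, norm3_col_eq_one U hU2, abs_of_nonneg (hpos i), mul_one]
  rw [← sum_dot3_columns U hU1 Bc W, hnn]
  apply Finset.sum_le_sum
  intro i _
  calc dot3 (Bc *ᵥ fun j => U j i) (W *ᵥ fun j => U j i)
      ≤ norm3 (Bc *ᵥ fun j => U j i) * norm3 (W *ᵥ fun j => U j i) := dot3_le_norm3 _ _
  _ ≤ norm3 (fun j => U j i) * norm3 (W *ᵥ fun j => U j i) := by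
      apply mul_le_mul_of_nonneg_right (hB _) (norm3_nonneg _)
  _ = lam i := by rw [norm3_col_eq_one U hU2, hcol i, one_mul]

lemma exists_dual_witness (Zm : Mat3) : ∃ Bc : Mat3,
    (∀ v, norm3 (Bc *ᵥ v) ≤ norm3 v) ∧ (Bcᵀ * Zm).trace = nuclearNorm Zm := by
  obtain ⟨U, lam, hU1, hU2, hpos, hspec, hnn⟩ := eigen_sqA Zm
  set M : Mat3 := U * Matrix.diagonal (fun i => (lam i)⁻¹) * Uᵀ with hM
  have hMT : Mᵀ = M := by
    rw [hM, Matrix.transpose_mul, Matrix.transpose_mul, Matrix.transpose_transpose,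
      Matrix.diagonal_transpose, Matrix.mul_assoc]
  refine ⟨Zm * M, ?_, ?_⟩
  · intro v
    have h1 : (Zm * M) *ᵥ v = Zm *ᵥ (M *ᵥ v) := (Matrix.mulVec_mulVec _ _ _).symm
    rw [h1, ← norm3_sqA_mulVec, Matrix.mulVec_mulVec, hspec, hM,
      sandwich_mul U _ _ hU2, Matrix.diagonal_mul_diagonal]
    apply contract_sandwich U _ v hU1 hU2
    intro i
    rcases eq_or_ne (lam i) 0 with h | h
    · simp [h]
    · rw [mul_inv_cancel₀ h]; norm_num
  · have hBt : (Zm * M)ᵀ * Zm = M * (Zmᵀ * Zm) := by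
      rw [Matrix.transpose_mul, hMT, Matrix.mul_assoc]
    rw [hBt, ← sqA_mul_self, hspec, hM, sandwich_mul U _ _ hU2,
      sandwich_mul U _ _ hU2, Matrix.diagonal_mul_diagonal, Matrix.diagonal_mul_diagonal,
      Matrix.trace_mul_cycle, hU2, Matrix.one_mul, Matrix.trace_diagonal, hnn]
    apply Finset.sum_congr rfl
    intro i _
    rcases eq_or_ne (lam i) 0 with h | h
    · simp [h]
    · field_simp

lemma nuclearNorm_add_le (X Y : Mat3) :
    nuclearNorm (X + Y) ≤ nuclearNorm X + nuclearNorm Y := by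
  obtain ⟨Bc, hc, htr⟩ := exists_dual_witness (X + Y)
  have hsplit : (Bcᵀ * (X + Y)).trace = (Bcᵀ * X).trace + (Bcᵀ * Y).trace := by
    rw [Matrix.mul_add, Matrix.trace_add]
  calc nuclearNorm (X + Y) = (Bcᵀ * (X + Y)).trace := htr.symm
  _ = (Bcᵀ * X).trace + (Bcᵀ * Y).trace := hsplit
  _ ≤ nuclearNorm X + nuclearNorm Y := add_le_add (trace_le_nn Bc X hc) (trace_le_nn Bc Y hc)

lemma nuclearNorm_nonneg (A : Mat3) : 0 ≤ nuclearNorm A := by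
  obtain ⟨U, lam, _, _, hpos, _, hnn⟩ := eigen_sqA A
  rw [hnn]
  exact Finset.sum_nonneg fun i _ => hpos i

end NNTriangle
-- Part B4: more nuclearNorm lemmas
section NNMore

lemma nuclearNorm_smul (c : ℝ) (A : Mat3) :
    nuclearNorm (c • A) = |c| * nuclearNorm A := by
  have hcand : (|c| • sqA A).PosSemidef := psd_smul (sqA_posSemidef A) (abs_nonneg c)
  have hsq : (|c| • sqA A) * (|c| • sqA A) = (c • A)ᵀ * (c • A) := by
    rw [Matrix.smul_mul, Matrix.mul_smul, smul_smul, sqA_mul_self, show |c| * |c| = c * c by rw [← abs_mul, abs_mul_self],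
      Matrix.transpose_smul, Matrix.smul_mul, Matrix.mul_smul, smul_smul]
  rw [nuclearNorm_eq_of_psd_sq (c • A) _ hcand hsq, Matrix.trace_smul, smul_eq_mul,
    nuclearNorm_eq_trace_sqA]

lemma nuclearNorm_zero : nuclearNorm (0 : Mat3) = 0 := by
  have := nuclearNorm_smul 0 (0 : Mat3)
  simpa using this

lemma nuclearNorm_neg (A : Mat3) : nuclearNorm (-A) = nuclearNorm A := by
  have := nuclearNorm_smul (-1) A
  simpa using this

lemma psd_vecMulVec (b : V3) : (Matrix.vecMulVec b b).PosSemidef := by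
  constructor
  · unfold Matrix.IsHermitian
    rw [conjT]; ext i j; simp [Matrix.vecMulVec_apply, mul_comm]
  · have h := Matrix.posSemidef_vecMulVec_self_star b
    rw [star_trivial] at h
    exact h.2

lemma nuclearNorm_vecMulVec (a b : V3) :
    nuclearNorm (Matrix.vecMulVec a b) = norm3 a * norm3 b := by
  rcases eq_or_ne b 0 with hb | hb
  · subst hb
    have h0 : Matrix.vecMulVec a (0 : V3) = 0 := by
      ext i j; simp [Matrix.vecMulVec_apply]
    rw [h0, nuclearNorm_zero]
    have : norm3 (0 : V3) = 0 := by
      simp [norm3, dot3]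
    rw [this, mul_zero]
  · have hbpos : 0 < dot3 b b := dot3_self_pos_of_ne b hb
    have hnb : 0 < norm3 b := Real.sqrt_pos.mpr hbpos
    set cand : Mat3 := (norm3 a / norm3 b) • Matrix.vecMulVec b b with hcand
    have hpsd : cand.PosSemidef :=
      psd_smul (psd_vecMulVec b) (div_nonneg (norm3_nonneg a) (norm3_nonneg b))
    have hbb : Matrix.vecMulVec b b * Matrix.vecMulVec b b = dot3 b b • Matrix.vecMulVec b b := by
      ext i j
      simp [Matrix.mul_apply, Matrix.vecMulVec_apply, dot3, Fin.sum_univ_three,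
        Matrix.smul_apply, smul_eq_mul]
      ring
    have hsq : cand * cand = (Matrix.vecMulVec a b)ᵀ * (Matrix.vecMulVec a b) := by
      rw [hcand, Matrix.smul_mul, Matrix.mul_smul, hbb, smul_smul, smul_smul]
      have htgt : (Matrix.vecMulVec a b)ᵀ * (Matrix.vecMulVec a b)
          = dot3 a a • Matrix.vecMulVec b b := by
        ext i j
        simp [Matrix.mul_apply, Matrix.vecMulVec_apply, Matrix.transpose_apply, dot3,
          Fin.sum_univ_three, Matrix.smul_apply, smul_eq_mul]
        ring
      rw [htgt]
      congr 1
      have h1 := norm3_sq a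
      have h2 := norm3_sq b
      field_simp
      nlinarith [h1, h2, hnb]
    rw [nuclearNorm_eq_of_psd_sq _ _ hpsd hsq, hcand, Matrix.trace_smul, smul_eq_mul]
    have htr : (Matrix.vecMulVec b b).trace = dot3 b b := by
      simp [Matrix.trace, Matrix.diag, Matrix.vecMulVec_apply, dot3]
    rw [htr]
    have h2 : dot3 b b = norm3 b * norm3 b := by have := norm3_sq b; nlinarith [this]
    rw [h2]
    field_simp

lemma nuclearNorm_sub_le (A B : Mat3) :
    |nuclearNorm A - nuclearNorm B| ≤ nuclearNorm (A - B) := by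
  have h1 : nuclearNorm A ≤ nuclearNorm (A - B) + nuclearNorm B := by
    have := nuclearNorm_add_le (A - B) B
    simpa using this
  have h2 : nuclearNorm B ≤ nuclearNorm (A - B) + nuclearNorm A := by
    have h3 := nuclearNorm_add_le (B - A) A
    have h4 : nuclearNorm (B - A) = nuclearNorm (A - B) := by
      rw [show B - A = -(A - B) from (neg_sub A B).symm, nuclearNorm_neg]
    rw [h4] at h3
    simpa using h3
  rw [abs_le]; constructor <;> linarith

lemma nuclearNorm_le_frob (A : Mat3) :
    nuclearNorm A ≤ Real.sqrt 3 * frobNorm A := by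
  obtain ⟨U, lam, hU1, hU2, hpos, hspec, hnn⟩ := eigen_sqA A
  have hsumsq : ∑ i, lam i ^ 2 = ∑ i, ∑ j, A i j ^ 2 := by
    have h1 : sqA A * sqA A = U * Matrix.diagonal (fun i => lam i * lam i) * Uᵀ := by
      rw [hspec, sandwich_mul U _ _ hU2, Matrix.diagonal_mul_diagonal]
    have h2 : (sqA A * sqA A).trace = ∑ i, lam i * lam i := by
      rw [h1, Matrix.trace_mul_cycle, hU2, Matrix.one_mul, Matrix.trace_diagonal]
    rw [sqA_mul_self] at h2
    have h3 : (Aᵀ * A).trace = ∑ j, ∑ i, A i j ^ 2 := by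
      simp [Matrix.trace, Matrix.diag, Matrix.mul_apply, Matrix.transpose_apply, sq]
    rw [h3] at h2
    calc ∑ i, lam i ^ 2 = ∑ i, lam i * lam i := by simp [sq]
    _ = ∑ j, ∑ i, A i j ^ 2 := h2.symm
    _ = ∑ i, ∑ j, A i j ^ 2 := by rw [Finset.sum_comm]

  have hcs : (∑ i, lam i) ^ 2 ≤ 3 * ∑ i, lam i ^ 2 := by
    simp only [Fin.sum_univ_three]
    nlinarith [sq_nonneg (lam 0 - lam 1), sq_nonneg (lam 0 - lam 2), sq_nonneg (lam 1 - lam 2)]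
  have hnn0 : 0 ≤ ∑ i, lam i := Finset.sum_nonneg fun i _ => hpos i
  rw [hnn]
  have : ∑ i, lam i = Real.sqrt ((∑ i, lam i) ^ 2) := (Real.sqrt_sq hnn0).symm
  rw [this]
  calc Real.sqrt ((∑ i, lam i) ^ 2) ≤ Real.sqrt (3 * ∑ i, ∑ j, A i j ^ 2) := by
        apply Real.sqrt_le_sqrt; rw [← hsumsq]; exact hcs
  _ = Real.sqrt 3 * frobNorm A := by
      rw [frobNorm, ← Real.sqrt_mul (by norm_num : (0:ℝ) ≤ 3)]

end NNMore
-- Part C: continuity and the closed relaxed set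
section Continuity

lemma continuous_dot3 {X : Type*} [TopologicalSpace X] {f g : X → V3}
    (hf : Continuous f) (hg : Continuous g) : Continuous fun z => dot3 (f z) (g z) := by
  unfold dot3
  exact continuous_finset_sum _ fun i _ =>
    ((continuous_apply i).comp hf).mul ((continuous_apply i).comp hg)

lemma continuous_norm3 {X : Type*} [TopologicalSpace X] {f : X → V3}
    (hf : Continuous f) : Continuous fun z => norm3 (f z) :=
  Real.continuous_sqrt.comp (continuous_dot3 hf hf)

lemma continuous_entry {X : Type*} [TopologicalSpace X] {f : X → Mat3}
    (hf : Continuous f) (i j : Fin 3) : Continuous fun z => f z i j :=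
  (continuous_apply j).comp ((continuous_apply i).comp hf)

lemma continuous_frobNorm_sub (B : Mat3) : Continuous fun A : Mat3 => frobNorm (A - B) := by
  unfold frobNorm
  apply Real.continuous_sqrt.comp
  apply continuous_finset_sum _ fun i _ => continuous_finset_sum _ fun j _ => ?_
  have h : Continuous fun A : Mat3 => A i j - B i j :=
    (continuous_entry continuous_id i j).sub continuous_const
  have heq : (fun A : Mat3 => (A - B) i j ^ 2) = fun A : Mat3 => (A i j - B i j) ^ 2 := by
    funext A; simp [Matrix.sub_apply]
  rw [heq]
  exact h.pow 2

lemma continuous_nuclearNorm : Continuous nuclearNorm := by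
  rw [continuous_iff_continuousAt]
  intro B
  unfold ContinuousAt
  have hb : ∀ A : Mat3, |nuclearNorm A - nuclearNorm B| ≤ Real.sqrt 3 * frobNorm (A - B) :=
    fun A => le_trans (nuclearNorm_sub_le A B) (nuclearNorm_le_frob (A - B))
  have hfrob : Filter.Tendsto (fun A : Mat3 => Real.sqrt 3 * frobNorm (A - B)) (nhds B)
      (nhds (Real.sqrt 3 * frobNorm (B - B))) :=
    (continuous_const.mul (continuous_frobNorm_sub B)).tendsto B
  have hzero : Real.sqrt 3 * frobNorm (B - B) = 0 := by
    simp [frobNorm, Matrix.sub_apply]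
  rw [hzero] at hfrob
  have hdiff : Filter.Tendsto (fun A : Mat3 => nuclearNorm A - nuclearNorm B) (nhds B)
      (nhds 0) := by
    apply squeeze_zero_norm (fun A => ?_) hfrob
    simpa [Real.norm_eq_abs] using hb A
  have := hdiff.add_const (nuclearNorm B)
  simpa using this

lemma continuous_M0 (p : ℝ) : Continuous fun z : Z => M0 p z := by
  apply continuous_pi; intro i
  apply continuous_pi; intro j
  have heq : (fun z : Z => M0 p z i j)
      = fun z : Z => z.1 i * z.2.1 j - z.2.2 i j + p * (if i = j then 1 else 0) := by
    funext z
    simp [M0, outer, Matrix.vecMulVec_apply, Matrix.sub_apply, Matrix.add_apply,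
      Matrix.smul_apply, Matrix.one_apply, smul_eq_mul]
  rw [heq]
  have h1 : Continuous fun z : Z => z.1 i := (continuous_apply i).comp continuous_fst
  have h2 : Continuous fun z : Z => z.2.1 j :=
    (continuous_apply j).comp (continuous_fst.comp continuous_snd)
  have h3 : Continuous fun z : Z => z.2.2 i j :=
    continuous_entry (continuous_snd.comp continuous_snd) i j
  exact ((h1.mul h2).sub h3).add continuous_const

lemma continuous_f0dot : Continuous fun z : Z =>
    dot3 (f0 (z.2.2 - z.2.2ᵀ)) (z.1 - z.2.1) := by
  apply continuous_dot3
  · apply continuous_pi; intro i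
    have h3 : Continuous fun z : Z => z.2.2 := continuous_snd.comp continuous_snd
    fin_cases i
    · show Continuous fun z : Z => f0 (z.2.2 - z.2.2ᵀ) (0 : Fin 3)
      have heq : (fun z : Z => f0 (z.2.2 - z.2.2ᵀ) 0) = fun z : Z => z.2.2 1 2 - z.2.2 2 1 := by
        funext z; simp [f0, Matrix.sub_apply, Matrix.transpose_apply]
      rw [heq]; exact (continuous_entry h3 1 2).sub (continuous_entry h3 2 1)
    · show Continuous fun z : Z => f0 (z.2.2 - z.2.2ᵀ) (1 : Fin 3)
      have heq : (fun z : Z => f0 (z.2.2 - z.2.2ᵀ) 1) = fun z : Z => z.2.2 2 0 - z.2.2 0 2 := by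
        funext z; simp [f0, Matrix.sub_apply, Matrix.transpose_apply]
      rw [heq]; exact (continuous_entry h3 2 0).sub (continuous_entry h3 0 2)
    · show Continuous fun z : Z => f0 (z.2.2 - z.2.2ᵀ) (2 : Fin 3)
      have heq : (fun z : Z => f0 (z.2.2 - z.2.2ᵀ) 2) = fun z : Z => z.2.2 0 1 - z.2.2 1 0 := by
        funext z; simp [f0, Matrix.sub_apply, Matrix.transpose_apply]
      rw [heq]; exact (continuous_entry h3 0 1).sub (continuous_entry h3 1 0)
  · apply continuous_pi; intro i
    have heq : (fun z : Z => (z.1 - z.2.1) i) = fun z : Z => z.1 i - z.2.1 i := by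
      funext z; simp
    rw [heq]
    exact ((continuous_apply i).comp continuous_fst).sub
      ((continuous_apply i).comp (continuous_fst.comp continuous_snd))

lemma continuous_Gfun (r s : ℝ) : Continuous fun z : Z => Gfun r s z := by
  unfold Gfun
  apply Real.continuous_sqrt.comp
  have h1 : Continuous fun z : Z => norm3 z.1 := continuous_norm3 continuous_fst
  have h2 : Continuous fun z : Z => norm3 z.2.1 :=
    continuous_norm3 (continuous_fst.comp continuous_snd)
  exact (continuous_const.sub (h1.pow 2)).mul (continuous_const.sub (h2.pow 2))

/-- the relaxed closed set -/
def Cset (r s p : ℝ) : Set Z :=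
  {z | norm3 z.1 ≤ r ∧ norm3 z.2.1 ≤ s ∧
    dot3 (f0 (z.2.2 - z.2.2ᵀ)) (z.1 - z.2.1) = 0 ∧
    nuclearNorm (M0 p z) ≤ Gfun r s z}

lemma Cset_closed (r s p : ℝ) : IsClosed (Cset r s p) := by
  have h1 : Continuous fun z : Z => norm3 z.1 := continuous_norm3 continuous_fst
  have h2 : Continuous fun z : Z => norm3 z.2.1 :=
    continuous_norm3 (continuous_fst.comp continuous_snd)
  have h4 : Continuous fun z : Z => nuclearNorm (M0 p z) :=
    continuous_nuclearNorm.comp (continuous_M0 p)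
  exact ((isClosed_le h1 continuous_const).inter
    ((isClosed_le h2 continuous_const).inter
      ((isClosed_eq continuous_f0dot continuous_const).inter
        (isClosed_le h4 (continuous_Gfun r s)))))

end Continuity
-- Part D: scalar key inequality and wave cone computation
section KeyScalar

lemma amgm (x y c : ℝ) (hx : 0 ≤ x) (hy : 0 ≤ y) (hc : 0 ≤ c) (h : c ^ 2 = x * y) :
    2 * c ≤ x + y := by nlinarith [sq_nonneg (x - y)]

lemma key_scalar (F0 F1 G0 G1 A B t : ℝ) (hF0 : 0 ≤ F0) (hF1 : 0 ≤ F1)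
    (hG0 : 0 ≤ G0) (hG1 : 0 ≤ G1) (hA : 0 ≤ A) (hB : 0 ≤ B)
    (ht0 : 0 ≤ t) (ht1 : t ≤ 1) :
    (1 - t) * Real.sqrt (F0 * G0) + t * Real.sqrt (F1 * G1) + (t * (1 - t)) * (A * B)
      ≤ Real.sqrt (((1 - t) * F0 + t * F1 + (t * (1 - t)) * A ^ 2)
          * ((1 - t) * G0 + t * G1 + (t * (1 - t)) * B ^ 2)) := by
  set s0 := Real.sqrt (F0 * G0) with hs0def
  set s1 := Real.sqrt (F1 * G1) with hs1def
  have hs0 : s0 ^ 2 = F0 * G0 := Real.sq_sqrt (mul_nonneg hF0 hG0)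
  have hs1 : s1 ^ 2 = F1 * G1 := Real.sq_sqrt (mul_nonneg hF1 hG1)
  have hs0n : 0 ≤ s0 := Real.sqrt_nonneg _
  have hs1n : 0 ≤ s1 := Real.sqrt_nonneg _
  have h1t : 0 ≤ 1 - t := by linarith
  have h1 : 2 * (s0 * s1) ≤ F0 * G1 + F1 * G0 := by
    apply amgm _ _ _ (mul_nonneg hF0 hG1) (mul_nonneg hF1 hG0) (mul_nonneg hs0n hs1n)
    rw [mul_pow, hs0, hs1]; ring
  have h2 : 2 * (A * B * s0) ≤ A ^ 2 * G0 + B ^ 2 * F0 := by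
    apply amgm _ _ _ (mul_nonneg (sq_nonneg A) hG0) (mul_nonneg (sq_nonneg B) hF0)
      (mul_nonneg (mul_nonneg hA hB) hs0n)
    rw [mul_pow, mul_pow, hs0]; ring
  have h3 : 2 * (A * B * s1) ≤ A ^ 2 * G1 + B ^ 2 * F1 := by
    apply amgm _ _ _ (mul_nonneg (sq_nonneg A) hG1) (mul_nonneg (sq_nonneg B) hF1)
      (mul_nonneg (mul_nonneg hA hB) hs1n)
    rw [mul_pow, mul_pow, hs1]; ring
  set L := (1 - t) * s0 + t * s1 + (t * (1 - t)) * (A * B) with hL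
  have hLnn : 0 ≤ L := by
    apply add_nonneg (add_nonneg (mul_nonneg h1t hs0n) (mul_nonneg ht0 hs1n))
    exact mul_nonneg (mul_nonneg ht0 h1t) (mul_nonneg hA hB)
  set X := (1 - t) * F0 + t * F1 + (t * (1 - t)) * A ^ 2 with hX
  set Y := (1 - t) * G0 + t * G1 + (t * (1 - t)) * B ^ 2 with hY
  have hkey : X * Y - L ^ 2
      = (t * (1 - t)) * (F0 * G1 + F1 * G0 - 2 * (s0 * s1))
        + (t * (1 - t)) * (1 - t) * (A ^ 2 * G0 + B ^ 2 * F0 - 2 * (A * B * s0))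
        + (t * (1 - t)) * t * (A ^ 2 * G1 + B ^ 2 * F1 - 2 * (A * B * s1)) := by
    rw [hX, hY, hL]
    linear_combination (-(1 - t) ^ 2) * hs0 + (-(t ^ 2)) * hs1
  have hτ : 0 ≤ t * (1 - t) := mul_nonneg ht0 h1t
  have hsq : L ^ 2 ≤ X * Y := by
    nlinarith [mul_nonneg hτ (by linarith : (0:ℝ) ≤ F0 * G1 + F1 * G0 - 2 * (s0 * s1)),
      mul_nonneg (mul_nonneg hτ h1t)
        (by linarith : (0:ℝ) ≤ A ^ 2 * G0 + B ^ 2 * F0 - 2 * (A * B * s0)),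
      mul_nonneg (mul_nonneg hτ ht0)
        (by linarith : (0:ℝ) ≤ A ^ 2 * G1 + B ^ 2 * F1 - 2 * (A * B * s1))]
  have hXY : 0 ≤ X * Y := le_trans (sq_nonneg L) hsq
  have := (Real.le_sqrt hLnn hXY).mpr hsq
  exact this

end KeyScalar

section WaveCone

/-- cross product on V3 -/
def cross3 (u v : V3) : V3 :=
  ![u 1 * v 2 - u 2 * v 1, u 2 * v 0 - u 0 * v 2, u 0 * v 1 - u 1 * v 0]

lemma f0_apply0 (A : Mat3) : f0 A 0 = A 1 2 := rfl
lemma f0_apply1 (A : Mat3) : f0 A 1 = A 2 0 := rfl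
lemma f0_apply2 (A : Mat3) : f0 A 2 = A 0 1 := rfl
lemma cross3_apply0 (u v : V3) : cross3 u v 0 = u 1 * v 2 - u 2 * v 1 := rfl
lemma cross3_apply1 (u v : V3) : cross3 u v 1 = u 2 * v 0 - u 0 * v 2 := rfl
lemma cross3_apply2 (u v : V3) : cross3 u v 2 = u 0 * v 1 - u 1 * v 0 := rfl

lemma wave_q_zero (Mb : Mat3) (ab bb ξ : V3) (c : ℝ) (hξ : ξ ≠ 0)
    (e1 : Mb *ᵥ ξ + c • ab = 0) (e2 : Mbᵀ *ᵥ ξ + c • bb = 0)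
    (e3 : dot3 ab ξ = 0) (e4 : dot3 bb ξ = 0) :
    dot3 (f0 (Mb - Mbᵀ)) (ab - bb) = 0 := by
  set v : V3 := f0 (Mb - Mbᵀ) with hv
  set wv : V3 := ab - bb with hwv
  have hcomp : ∀ i, Mb i 0 * ξ 0 + Mb i 1 * ξ 1 + Mb i 2 * ξ 2 + c * ab i = 0 := by
    intro i
    have h1 := congrFun e1 i
    simp only [Pi.add_apply, Pi.smul_apply, Pi.zero_apply, smul_eq_mul, Matrix.mulVec,
      dotProduct, Fin.sum_univ_three] at h1
    linarith
  have hcompT : ∀ i, Mb 0 i * ξ 0 + Mb 1 i * ξ 1 + Mb 2 i * ξ 2 + c * bb i = 0 := by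
    intro i
    have h2 := congrFun e2 i
    simp only [Pi.add_apply, Pi.smul_apply, Pi.zero_apply, smul_eq_mul, Matrix.mulVec,
      dotProduct, Matrix.transpose_apply, Fin.sum_univ_three] at h2
    linarith
  have hv0 : v 0 = Mb 1 2 - Mb 2 1 := by rw [hv, f0_apply0]; simp [Matrix.sub_apply]
  have hv1 : v 1 = Mb 2 0 - Mb 0 2 := by rw [hv, f0_apply1]; simp [Matrix.sub_apply]
  have hv2 : v 2 = Mb 0 1 - Mb 1 0 := by rw [hv, f0_apply2]; simp [Matrix.sub_apply]
  have hw0 : wv 0 = ab 0 - bb 0 := rfl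
  have hw1 : wv 1 = ab 1 - bb 1 := rfl
  have hw2 : wv 2 = ab 2 - bb 2 := rfl
  -- cross3 ξ v = (-c) • wv, componentwise
  have hc0 : ξ 1 * v 2 - ξ 2 * v 1 = -c * wv 0 := by
    rw [hv1, hv2, hw0]; linear_combination hcomp 0 - hcompT 0
  have hc1 : ξ 2 * v 0 - ξ 0 * v 2 = -c * wv 1 := by
    rw [hv0, hv2, hw1]; linear_combination hcomp 1 - hcompT 1
  have hc2 : ξ 0 * v 1 - ξ 1 * v 0 = -c * wv 2 := by
    rw [hv0, hv1, hw2]; linear_combination hcomp 2 - hcompT 2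
  -- orthogonality: dot3 ξ wv = 0
  have hoxw : ξ 0 * wv 0 + ξ 1 * wv 1 + ξ 2 * wv 2 = 0 := by
    simp only [dot3, Fin.sum_univ_three] at e3 e4
    rw [hw0, hw1, hw2]; linarith
  -- Lagrange identity finishing
  have hξξ : 0 < dot3 ξ ξ := dot3_self_pos_of_ne ξ hξ
  have lag : dot3 ξ ξ * dot3 v wv
      = (ξ 0 * v 0 + ξ 1 * v 1 + ξ 2 * v 2) * (ξ 0 * wv 0 + ξ 1 * wv 1 + ξ 2 * wv 2)
        + ((ξ 1 * v 2 - ξ 2 * v 1) * (ξ 1 * wv 2 - ξ 2 * wv 1)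
          + (ξ 2 * v 0 - ξ 0 * v 2) * (ξ 2 * wv 0 - ξ 0 * wv 2)
          + (ξ 0 * v 1 - ξ 1 * v 0) * (ξ 0 * wv 1 - ξ 1 * wv 0)) := by
    simp only [dot3, Fin.sum_univ_three]; ring
  have trip : (-c * wv 0) * (ξ 1 * wv 2 - ξ 2 * wv 1)
      + (-c * wv 1) * (ξ 2 * wv 0 - ξ 0 * wv 2)
      + (-c * wv 2) * (ξ 0 * wv 1 - ξ 1 * wv 0) = 0 := by ring
  have hfinal : dot3 ξ ξ * dot3 v wv = 0 := by
    rw [lag, hoxw, mul_zero, zero_add, hc0, hc1, hc2, trip]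
  have := mul_eq_zero.mp hfinal
  rcases this with h | h
  · exact absurd h (ne_of_gt hξξ)
  · exact h

end WaveCone
-- Part E: Lambda convexity of Cset
section LambdaConv

lemma norm3_convex (u v : V3) (t : ℝ) (h0 : 0 ≤ t) (h1 : t ≤ 1) :
    norm3 (u + t • (v - u)) ≤ (1 - t) * norm3 u + t * norm3 v := by
  have heq : u + t • (v - u) = (1 - t) • u + t • v := by
    funext i
    simp only [Pi.add_apply, Pi.smul_apply, Pi.sub_apply, smul_eq_mul]
    ring
  rw [heq]
  calc norm3 ((1 - t) • u + t • v) ≤ norm3 ((1 - t) • u) + norm3 (t • v) := norm3_add_le _ _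
  _ = (1 - t) * norm3 u + t * norm3 v := by
      rw [norm3_smul, norm3_smul, abs_of_nonneg (by linarith : (0:ℝ) ≤ 1 - t),
        abs_of_nonneg h0]

set_option maxHeartbeats 1600000 in
lemma Cset_lambdaConvex (r s p : ℝ) : LambdaConvex (Cset r s p) := by
  intro z₁ h₁ z₂ h₂ hw t ht
  obtain ⟨ht0, ht1⟩ := ht
  obtain ⟨hα₁, hβ₁, hL₁, hN₁⟩ := h₁
  obtain ⟨hα₂, hβ₂, hL₂, hN₂⟩ := h₂
  obtain ⟨ξ, c, hξ, e1, e2, e3, e4⟩ := hw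
  have hq := wave_q_zero (z₁.2.2 - z₂.2.2) (z₁.1 - z₂.1) (z₁.2.1 - z₂.2.1) ξ c hξ e1 e2 e3 e4
  have hw1 : (z₁ + t • (z₂ - z₁)).1 = z₁.1 + t • (z₂.1 - z₁.1) := rfl
  have hw21 : (z₁ + t • (z₂ - z₁)).2.1 = z₁.2.1 + t • (z₂.2.1 - z₁.2.1) := rfl
  have hw22 : (z₁ + t • (z₂ - z₁)).2.2 = z₁.2.2 + t • (z₂.2.2 - z₁.2.2) := rfl
  have hα₁n := norm3_nonneg z₁.1
  have hβ₁n := norm3_nonneg z₁.2.1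
  have hα₂n := norm3_nonneg z₂.1
  have hβ₂n := norm3_nonneg z₂.2.1
  refine ⟨?_, ?_, ?_, ?_⟩
  · -- |α(t)| ≤ r
    rw [hw1]
    calc norm3 (z₁.1 + t • (z₂.1 - z₁.1)) ≤ (1 - t) * norm3 z₁.1 + t * norm3 z₂.1 :=
          norm3_convex _ _ t ht0 ht1
    _ ≤ r := by nlinarith
  · -- |β(t)| ≤ s
    rw [hw21]
    calc norm3 (z₁.2.1 + t • (z₂.2.1 - z₁.2.1)) ≤ (1 - t) * norm3 z₁.2.1 + t * norm3 z₂.2.1 :=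
          norm3_convex _ _ t ht0 ht1
    _ ≤ s := by nlinarith
  · -- linear constraint
    rw [hw1, hw21, hw22]
    simp only [dot3, Fin.sum_univ_three, f0_apply0, f0_apply1, f0_apply2,
      Matrix.sub_apply, Matrix.add_apply, Matrix.smul_apply, Matrix.transpose_apply,
      Pi.sub_apply, Pi.add_apply, Pi.smul_apply, smul_eq_mul] at hL₁ hL₂ hq ⊢
    linear_combination (1 - t) * hL₁ + t * hL₂ + (t ^ 2 - t) * hq
  · -- nuclear norm vs G
    set av : V3 := z₂.1 - z₁.1 with hav
    set bv : V3 := z₂.2.1 - z₁.2.1 with hbv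
    have hM0id : M0 p (z₁ + t • (z₂ - z₁))
        = (((1:ℝ) - t) • M0 p z₁ + t • M0 p z₂) + (t ^ 2 - t) • outer av bv := by
      ext i j
      simp only [M0, outer, Matrix.vecMulVec_apply, Matrix.sub_apply, Matrix.add_apply,
        Matrix.smul_apply, Matrix.one_apply, smul_eq_mul, hw1, hw21, hw22,
        Pi.add_apply, Pi.sub_apply, Pi.smul_apply, hav, hbv]
      ring
    set F0 := r ^ 2 - norm3 z₁.1 ^ 2 with hF0
    set F1 := r ^ 2 - norm3 z₂.1 ^ 2 with hF1
    set G0 := s ^ 2 - norm3 z₁.2.1 ^ 2 with hG0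
    set G1 := s ^ 2 - norm3 z₂.2.1 ^ 2 with hG1
    have hF0n : 0 ≤ F0 := by rw [hF0]; nlinarith
    have hF1n : 0 ≤ F1 := by rw [hF1]; nlinarith
    have hG0n : 0 ≤ G0 := by rw [hG0]; nlinarith
    have hG1n : 0 ≤ G1 := by rw [hG1]; nlinarith
    have hG₁ : Gfun r s z₁ = Real.sqrt (F0 * G0) := rfl
    have hG₂ : Gfun r s z₂ = Real.sqrt (F1 * G1) := rfl
    have hXid : (1 - t) * F0 + t * F1 + (t * (1 - t)) * norm3 av ^ 2
        = r ^ 2 - norm3 (z₁ + t • (z₂ - z₁)).1 ^ 2 := by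
      rw [hw1]
      simp only [hF0, hF1, norm3_sq, hav, dot3, Fin.sum_univ_three, Pi.sub_apply,
        Pi.add_apply, Pi.smul_apply, smul_eq_mul]
      ring
    have hYid : (1 - t) * G0 + t * G1 + (t * (1 - t)) * norm3 bv ^ 2
        = s ^ 2 - norm3 (z₁ + t • (z₂ - z₁)).2.1 ^ 2 := by
      rw [hw21]
      simp only [hG0, hG1, norm3_sq, hbv, dot3, Fin.sum_univ_three, Pi.sub_apply,
        Pi.add_apply, Pi.smul_apply, smul_eq_mul]
      ring
    have hGw : Gfun r s (z₁ + t • (z₂ - z₁))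
        = Real.sqrt (((1 - t) * F0 + t * F1 + (t * (1 - t)) * norm3 av ^ 2)
            * ((1 - t) * G0 + t * G1 + (t * (1 - t)) * norm3 bv ^ 2)) := by
      rw [hXid, hYid]; rfl
    rw [hGw, hM0id]
    calc nuclearNorm ((((1:ℝ) - t) • M0 p z₁ + t • M0 p z₂) + (t ^ 2 - t) • outer av bv)
        ≤ nuclearNorm (((1:ℝ) - t) • M0 p z₁ + t • M0 p z₂)
          + nuclearNorm ((t ^ 2 - t) • outer av bv) := nuclearNorm_add_le _ _
    _ ≤ (nuclearNorm (((1:ℝ) - t) • M0 p z₁) + nuclearNorm (t • M0 p z₂))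
          + nuclearNorm ((t ^ 2 - t) • outer av bv) :=
        add_le_add_left (nuclearNorm_add_le _ _) _
    _ = (1 - t) * nuclearNorm (M0 p z₁) + t * nuclearNorm (M0 p z₂)
          + (t - t ^ 2) * (norm3 av * norm3 bv) := by
        rw [nuclearNorm_smul, nuclearNorm_smul, nuclearNorm_smul,
          show outer av bv = Matrix.vecMulVec av bv from rfl, nuclearNorm_vecMulVec,
          abs_of_nonneg (by linarith : (0:ℝ) ≤ 1 - t), abs_of_nonneg ht0,
          abs_of_nonpos (by nlinarith : t ^ 2 - t ≤ 0)]
        ring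
    _ ≤ (1 - t) * Real.sqrt (F0 * G0) + t * Real.sqrt (F1 * G1)
          + (t * (1 - t)) * (norm3 av * norm3 bv) := by
        rw [hG₁] at hN₁; rw [hG₂] at hN₂
        have hprod : 0 ≤ norm3 av * norm3 bv := mul_nonneg (norm3_nonneg _) (norm3_nonneg _)
        nlinarith [hN₁, hN₂]
    _ ≤ _ := key_scalar F0 F1 G0 G1 (norm3 av) (norm3 bv) t hF0n hF1n hG0n hG1n
          (norm3_nonneg _) (norm3_nonneg _) ht0 ht1

end LambdaConv
-- Part F: inclusions and the main theorem
section Final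

def Uset (r s p : ℝ) : Set Z :=
  {z : Z | norm3 z.1 < r ∧ norm3 z.2.1 < s ∧
    dot3 (f0 (z.2.2 - z.2.2ᵀ)) (z.1 - z.2.1) = 0 ∧
    nuclearNorm (M0 p z) < Gfun r s z}

lemma Uset_sub_Cset (r s p : ℝ) : Uset r s p ⊆ Cset r s p :=
  fun _ ⟨h1, h2, h3, h4⟩ => ⟨le_of_lt h1, le_of_lt h2, h3, le_of_lt h4⟩

lemma Krs_sub_Cset (r s p : ℝ) : Krs r s p ⊆ Cset r s p := by
  rintro z ⟨hM, hα, hβ⟩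
  have hM0 : M0 p z = 0 := by rw [M0, hM]; abel
  refine ⟨le_of_eq hα, le_of_eq hβ, ?_, ?_⟩
  · rw [hM]
    simp only [dot3, Fin.sum_univ_three, f0_apply0, f0_apply1, f0_apply2,
      Matrix.sub_apply, Matrix.add_apply, Matrix.smul_apply, Matrix.transpose_apply,
      Matrix.one_apply, outer, Matrix.vecMulVec_apply, Pi.sub_apply, smul_eq_mul,
      show ((0:Fin 3) = 1) = False by simp, show ((0:Fin 3) = 2) = False by simp,
      show ((1:Fin 3) = 0) = False by simp, show ((1:Fin 3) = 2) = False by simp,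
      show ((2:Fin 3) = 0) = False by simp, show ((2:Fin 3) = 1) = False by simp,
      if_false, mul_zero, zero_mul, sub_zero, zero_sub, add_zero]
    ring
  · rw [hM0, nuclearNorm_zero]
    exact Real.sqrt_nonneg _

lemma Cset_sub_closureU (r s p : ℝ) (hr : 0 < r) (hs : 0 < s) :
    Cset r s p ⊆ closure (Uset r s p) := by
  intro z hz
  obtain ⟨h1, h2, h3, h4⟩ := hz
  set T : ℕ → ℝ := fun n => 1 - 1 / (n + 1) with hT
  have hT0 : ∀ n, 0 ≤ T n := by
    intro n
    have : (1:ℝ) / (n + 1) ≤ 1 := by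
      rw [div_le_one (by positivity)]
      simp
    simp only [hT]; linarith
  have hT1 : ∀ n, T n < 1 := by
    intro n
    have : (0:ℝ) < 1 / (n + 1) := by positivity
    simp only [hT]; linarith
  set zn : ℕ → Z := fun n =>
    (T n • z.1, T n • z.2.1, (T n) ^ 2 • z.2.2 + (1 - (T n) ^ 2) • (p • (1 : Mat3))) with hzn
  have hTt : Filter.Tendsto T Filter.atTop (nhds 1) := by
    have h := tendsto_one_div_add_atTop_nhds_zero_nat (𝕜 := ℝ)
    have hc : Filter.Tendsto (fun _ : ℕ => (1:ℝ)) Filter.atTop (nhds 1) := tendsto_const_nhds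
    have := hc.sub h
    simpa [hT, one_div] using this
  apply mem_closure_of_tendsto (f := zn) (b := Filter.atTop)
  · have c1 : Filter.Tendsto (fun n => T n • z.1) Filter.atTop (nhds z.1) := by
      have := hTt.smul_const z.1
      simpa using this
    have c2 : Filter.Tendsto (fun n => T n • z.2.1) Filter.atTop (nhds z.2.1) := by
      have := hTt.smul_const z.2.1
      simpa using this
    have c3 : Filter.Tendsto (fun n => (T n) ^ 2 • z.2.2 + (1 - (T n) ^ 2) • (p • (1 : Mat3)))
        Filter.atTop (nhds z.2.2) := by
      have e1 := (hTt.pow 2).smul_const z.2.2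
      have hc : Filter.Tendsto (fun _ : ℕ => (1:ℝ)) Filter.atTop (nhds 1) := tendsto_const_nhds
      have e2 := (hc.sub (hTt.pow 2)).smul_const (p • (1 : Mat3))
      have := e1.add e2
      simpa using this
    have := c1.prodMk (c2.prodMk c3)
    rw [← nhds_prod_eq, ← nhds_prod_eq] at this
    exact this
  · apply Filter.Eventually.of_forall
    intro n
    have ht0 := hT0 n
    have ht1 := hT1 n
    have hα1 := norm3_nonneg z.1
    have hβ1 := norm3_nonneg z.2.1
    refine ⟨?_, ?_, ?_, ?_⟩
    · show norm3 (T n • z.1) < r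
      rw [norm3_smul, abs_of_nonneg ht0]
      nlinarith
    · show norm3 (T n • z.2.1) < s
      rw [norm3_smul, abs_of_nonneg ht0]
      nlinarith
    · show dot3 (f0 ((zn n).2.2 - (zn n).2.2ᵀ)) ((zn n).1 - (zn n).2.1) = 0
      have hz22 : (zn n).2.2 = (T n) ^ 2 • z.2.2 + (1 - (T n) ^ 2) • (p • (1 : Mat3)) := rfl
      have hz1 : (zn n).1 = T n • z.1 := rfl
      have hz21 : (zn n).2.1 = T n • z.2.1 := rfl
      rw [hz22, hz1, hz21]
      simp only [dot3, Fin.sum_univ_three, f0_apply0, f0_apply1, f0_apply2,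
        Matrix.sub_apply, Matrix.add_apply, Matrix.smul_apply, Matrix.transpose_apply,
        Matrix.one_apply, Pi.sub_apply, Pi.smul_apply, smul_eq_mul,
        show ((0:Fin 3) = 1) = False by simp, show ((0:Fin 3) = 2) = False by simp,
        show ((1:Fin 3) = 0) = False by simp, show ((1:Fin 3) = 2) = False by simp,
        show ((2:Fin 3) = 0) = False by simp, show ((2:Fin 3) = 1) = False by simp,
        if_false, mul_zero, zero_mul, sub_zero, zero_sub, add_zero] at h3 ⊢
      linear_combination (T n) ^ 3 * h3
    · show nuclearNorm (M0 p (zn n)) < Gfun r s (zn n)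
      have hM0n : M0 p (zn n) = (T n) ^ 2 • M0 p z := by
        ext i j
        simp only [M0, outer, Matrix.vecMulVec_apply, Matrix.sub_apply, Matrix.add_apply,
          Matrix.smul_apply, Matrix.one_apply, smul_eq_mul, hzn, Pi.smul_apply]
        ring
      rw [hM0n, nuclearNorm_smul, abs_of_nonneg (sq_nonneg _)]
      set F := r ^ 2 - norm3 z.1 ^ 2 with hF
      set G' := s ^ 2 - norm3 z.2.1 ^ 2 with hG'
      have hFn : 0 ≤ F := by rw [hF]; nlinarith
      have hGn : 0 ≤ G' := by rw [hG']; nlinarith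
      have hGz : Gfun r s z = Real.sqrt (F * G') := rfl
      have hn1 : norm3 (zn n).1 = T n * norm3 z.1 := by
        rw [show (zn n).1 = T n • z.1 from rfl, norm3_smul, abs_of_nonneg ht0]
      have hn2 : norm3 (zn n).2.1 = T n * norm3 z.2.1 := by
        rw [show (zn n).2.1 = T n • z.2.1 from rfl, norm3_smul, abs_of_nonneg ht0]
      have hGzn : Gfun r s (zn n)
          = Real.sqrt ((r ^ 2 - (T n) ^ 2 * norm3 z.1 ^ 2)
              * (s ^ 2 - (T n) ^ 2 * norm3 z.2.1 ^ 2)) := by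
        unfold Gfun
        rw [hn1, hn2]
        congr 1
        ring
      rw [hGz] at h4
      have h1T2 : 0 < 1 - (T n) ^ 2 := by nlinarith
      have e1 : (T n) ^ 2 * Real.sqrt (F * G') = Real.sqrt ((T n) ^ 4 * (F * G')) := by
        rw [show (T n) ^ 4 = ((T n) ^ 2) ^ 2 by ring,
          Real.sqrt_mul (sq_nonneg ((T n) ^ 2)), Real.sqrt_sq (sq_nonneg (T n))]
      have ha : r ^ 2 - (T n) ^ 2 * norm3 z.1 ^ 2
          = (T n) ^ 2 * F + (1 - (T n) ^ 2) * r ^ 2 := by rw [hF]; ring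
      have hb : s ^ 2 - (T n) ^ 2 * norm3 z.2.1 ^ 2
          = (T n) ^ 2 * G' + (1 - (T n) ^ 2) * s ^ 2 := by rw [hG']; ring
      have e2 : Real.sqrt ((T n) ^ 4 * (F * G'))
          < Real.sqrt ((r ^ 2 - (T n) ^ 2 * norm3 z.1 ^ 2)
              * (s ^ 2 - (T n) ^ 2 * norm3 z.2.1 ^ 2)) := by
        rw [ha, hb]
        apply Real.sqrt_lt_sqrt (by positivity)
        nlinarith [mul_pos (mul_pos h1T2 h1T2) (mul_pos (mul_pos hr hr) (mul_pos hs hs)),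
          mul_nonneg (mul_nonneg (sq_nonneg (T n)) h1T2.le) (mul_nonneg hFn (sq_nonneg s)),
          mul_nonneg (mul_nonneg (sq_nonneg (T n)) h1T2.le) (mul_nonneg hGn (sq_nonneg r))]
      calc (T n) ^ 2 * nuclearNorm (M0 p z) ≤ (T n) ^ 2 * Real.sqrt (F * G') :=
            mul_le_mul_of_nonneg_left h4 (sq_nonneg _)
      _ = Real.sqrt ((T n) ^ 4 * (F * G')) := e1
      _ < _ := by rw [hGzn]; exact e2

lemma closureU_lambdaConvex (r s p : ℝ) (hr : 0 < r) (hs : 0 < s) :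
    LambdaConvex (closure (Uset r s p)) := by
  intro z₁ h₁ z₂ h₂ hw t ht
  have hC : closure (Uset r s p) ⊆ Cset r s p :=
    closure_minimal (Uset_sub_Cset r s p) (Cset_closed r s p)
  exact Cset_sub_closureU r s p hr hs
    (Cset_lambdaConvex r s p z₁ (hC h₁) z₂ (hC h₂) hw t ht)

end Final

theorem stmt2 (r s p : ℝ) (hr : 0 < r) (hs : 0 < s) (hp : |p| < r * s) :
    lambdaHull r s p ⊆ closure {z : Z | norm3 z.1 < r ∧ norm3 z.2.1 < s ∧
      dot3 (f0 (z.2.2 - z.2.2ᵀ)) (z.1 - z.2.1) = 0 ∧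
      nuclearNorm (M0 p z) < Gfun r s z} := by
  intro z hz
  have hmem := hz (closure (Uset r s p))
  apply hmem
  constructor
  · exact closureU_lambdaConvex r s p hr hs
  · exact (Krs_sub_Cset r s p).trans (Cset_sub_closureU r s p hr hs)
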